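/- arXiv:1110.4999 — 9 statements merged into one kernel-verified Lean document; each statement's English description precedes it below -/
import Mathlib

section
/- For every q > 0, R_UB1 − R1(q) < ½·log₂(1 + s/q) + ½. -/
/-!
The terms in `s / q` cancel, so the claim is `log₂ X - log₂ Y < 1` for
`X = 1 + (h_SD + h_RD)²` and `Y = 1 + h_SD² + h_RD²`, that is `X < 2 Y`,
which holds because `2 h_SD h_RD ≤ h_SD² + h_RD² < 1 + h_SD² + h_RD²`.
-/

theorem Real.logb_lt_logb_add_one_of_lt_mul {b x y : ℝ} (hb : 1 < b) (hx : 0 < x)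
    (hxy : x < b * y) : Real.logb b x < Real.logb b y + 1 := by
  have hy : 0 < y := pos_of_mul_pos_right (hx.trans hxy) (by positivity)
  calc Real.logb b x < Real.logb b (b * y) := Real.logb_lt_logb hb hx hxy
    _ = Real.logb b y + 1 := by
      rw [Real.logb_mul (by positivity) hy.ne', Real.logb_self_eq_one hb, add_comm]

theorem one_add_sq_add_sq_add_two_mul_lt_two_mul (a b : ℝ) :
    1 + a ^ 2 + b ^ 2 + 2 * a * b < 2 * (1 + a ^ 2 + b ^ 2) := by
  nlinarith [sq_nonneg (a - b)]

theorem gap_RUB1_R1_general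
    (hSD hRD ρz : ℝ)
    (q : ℝ) :
    (1/2 * Real.logb 2 (1 + hSD^2 + hRD^2 + 2*hSD*hRD))
      - (1/2 * Real.logb 2 (1 + hSD^2 + hRD^2)
          - 1/2 * Real.logb 2 (1 + (1 - ρz^2) / q))
      < 1/2 * Real.logb 2 (1 + (1 - ρz^2) / q) + 1/2 := by
  have hX : 0 < 1 + hSD ^ 2 + hRD ^ 2 + 2 * hSD * hRD := by
    nlinarith [sq_nonneg (hSD + hRD)]
  have := Real.logb_lt_logb_add_one_of_lt_mul one_lt_two hX
    (one_add_sq_add_sq_add_two_mul_lt_two_mul hSD hRD)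
  linarith

/-- For every `q > 0`, `R_UB1 - R1(q) < ½·log₂(1 + s/q) + ½`,
where `s = 1 - ρz²`. -/
theorem gap_RUB1_R1
    (hSD hRD hSR ρz : ℝ)
    (hSD_nn : 0 ≤ hSD) (hRD_nn : 0 ≤ hRD) (hSR_nn : 0 ≤ hSR)
    (hρz_lb : -1 < ρz) (hρz_ub : ρz < 1)
    (q : ℝ) (hq : 0 < q) :
    (1/2 * Real.logb 2 (1 + hSD^2 + hRD^2 + 2*hSD*hRD))
      - (1/2 * Real.logb 2 (1 + hSD^2 + hRD^2)
          - 1/2 * Real.logb 2 (1 + (1 - ρz^2) / q))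
      < 1/2 * Real.logb 2 (1 + (1 - ρz^2) / q) + 1/2 :=
  gap_RUB1_R1_general hSD hRD ρz q
end

section
/- For every q > 0, min{ R_UB1, R_UB2 } − min{ R1(q), R2(q) } < max{ ½·log₂(1 + s/q) + ½, ½·log₂(1 + q/s) }. -/
/-!
Both minima are compared termwise: `min a₁ a₂ - min b₁ b₂ ≤ max (a₁ - b₁) (a₂ - b₂)`.
For the first pair, `1 + (h_SD + h_RD)² < 2 (1 + h_SD² + h_RD²)` costs at most half a bit.
For the second pair, `h_SD² + h_SR² - 2ρ h_SD h_SR ≥ 0` because `|ρ| < 1`, and it grows strictly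
to the numerator of `R2` once `q (1 + h_SD²)` is added, so `R_UB2 - R2(q) < ½ log₂(1 + q/s)`.
-/

theorem min_sub_min_lt_max {α : Type*} [AddCommGroup α] [LinearOrder α] [IsOrderedAddMonoid α]
    {a₁ a₂ b₁ b₂ c₁ c₂ : α} (h₁ : a₁ - b₁ < c₁) (h₂ : a₂ - b₂ < c₂) :
    min a₁ a₂ - min b₁ b₂ < max c₁ c₂ := by
  rcases le_total b₁ b₂ with hb | hb
  · rw [min_eq_left hb]
    calc min a₁ a₂ - b₁ ≤ a₁ - b₁ := sub_le_sub_right (min_le_left _ _) _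
      _ < c₁ := h₁
      _ ≤ max c₁ c₂ := le_max_left _ _
  · rw [min_eq_right hb]
    calc min a₁ a₂ - b₂ ≤ a₂ - b₂ := sub_le_sub_right (min_le_right _ _) _
      _ < c₂ := h₂
      _ ≤ max c₁ c₂ := le_max_right _ _

theorem Real.logb_two_lt_add_one_of_lt_two_mul {x y : ℝ} (hx : 0 < x) (hxy : x < 2 * y) :
    Real.logb 2 x < Real.logb 2 y + 1 := by
  have hy : 0 < y := by linarith
  calc Real.logb 2 x < Real.logb 2 (2 * y) := Real.logb_lt_logb (by norm_num) hx hxy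
    _ = Real.logb 2 y + 1 := by
      rw [Real.logb_mul two_ne_zero hy.ne', Real.logb_self_eq_one one_lt_two, add_comm]

theorem sq_add_sq_sub_two_mul_mul_nonneg {ρ : ℝ} (hρ₁ : -1 ≤ ρ) (hρ₂ : ρ ≤ 1) (a b : ℝ) :
    0 ≤ a ^ 2 + b ^ 2 - 2 * ρ * a * b := by
  nlinarith [sq_nonneg (a - b), sq_nonneg (a + b), sq_nonneg (a * b),
    mul_nonneg (sub_nonneg.2 hρ₂) (sq_nonneg (a + b)),
    mul_nonneg (neg_le_iff_add_nonneg.1 hρ₁) (sq_nonneg (a - b))]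

theorem gap_cutset_nnc_general
    (hSD hRD hSR ρz : ℝ)
    (hρz_lb : -1 < ρz) (hρz_ub : ρz < 1)
    (q : ℝ) (hq : 0 < q) :
    min (1/2 * Real.logb 2 (1 + hSD^2 + hRD^2 + 2*hSD*hRD))
        (1/2 * Real.logb 2 (1 + (hSD^2 + hSR^2 - 2*ρz*hSD*hSR) / (1 - ρz^2)))
      - min (1/2 * Real.logb 2 (1 + hSD^2 + hRD^2)
              - 1/2 * Real.logb 2 (1 + (1 - ρz^2) / q))
            (1/2 * Real.logb 2 (1 + (q + (q+1)*hSD^2 + hSR^2 - 2*ρz*hSD*hSR) / (1 - ρz^2))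
              - 1/2 * Real.logb 2 (1 + q / (1 - ρz^2)))
      < max (1/2 * Real.logb 2 (1 + (1 - ρz^2) / q) + 1/2)
            (1/2 * Real.logb 2 (1 + q / (1 - ρz^2))) := by
  have hs : 0 < 1 - ρz ^ 2 := by nlinarith
  have hK := sq_add_sq_sub_two_mul_mul_nonneg hρz_lb.le hρz_ub.le hSD hSR
  apply min_sub_min_lt_max
  · have := Real.logb_two_lt_add_one_of_lt_two_mul (x := 1 + hSD^2 + hRD^2 + 2*hSD*hRD)
      (y := 1 + hSD^2 + hRD^2) (by nlinarith [sq_nonneg (hSD + hRD)])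
      (by nlinarith [sq_nonneg (hSD - hRD)])
    linarith
  · have : Real.logb 2 (1 + (hSD^2 + hSR^2 - 2*ρz*hSD*hSR) / (1 - ρz^2))
        < Real.logb 2 (1 + (q + (q+1)*hSD^2 + hSR^2 - 2*ρz*hSD*hSR) / (1 - ρz^2)) := by
      apply Real.logb_lt_logb one_lt_two (by positivity)
      gcongr
      nlinarith [sq_nonneg hSD]
    linarith

/-- For every `q > 0`,
`min{R_UB1, R_UB2} - min{R1(q), R2(q)} < max{½·log₂(1 + s/q) + ½, ½·log₂(1 + q/s)}`,
where `s = 1 - ρz²`. -/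
theorem gap_cutset_nnc
    (hSD hRD hSR ρz : ℝ)
    (hSD_nn : 0 ≤ hSD) (hRD_nn : 0 ≤ hRD) (hSR_nn : 0 ≤ hSR)
    (hρz_lb : -1 < ρz) (hρz_ub : ρz < 1)
    (q : ℝ) (hq : 0 < q) :
    min (1/2 * Real.logb 2 (1 + hSD^2 + hRD^2 + 2*hSD*hRD))
        (1/2 * Real.logb 2 (1 + (hSD^2 + hSR^2 - 2*ρz*hSD*hSR) / (1 - ρz^2)))
      - min (1/2 * Real.logb 2 (1 + hSD^2 + hRD^2)
              - 1/2 * Real.logb 2 (1 + (1 - ρz^2) / q))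
            (1/2 * Real.logb 2 (1 + (q + (q+1)*hSD^2 + hSR^2 - 2*ρz*hSD*hSR) / (1 - ρz^2))
              - 1/2 * Real.logb 2 (1 + q / (1 - ρz^2)))
      < max (1/2 * Real.logb 2 (1 + (1 - ρz^2) / q) + 1/2)
            (1/2 * Real.logb 2 (1 + q / (1 - ρz^2))) :=
  gap_cutset_nnc_general hSD hRD hSR ρz hρz_lb hρz_ub q hq
end

section
/- For every q > 0, max{ ½·log₂(1 + s/q) + ½, ½·log₂(1 + q/s) } ≥ ½·log₂(3), with equality if and only if q = 2·s. (That is, the quantization level q* = 2(1 − ρ_z²) minimizes the maximum of the two gap terms, and the minimax value equals ½·log₂ 3.) -/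
/-!
Write `x = s / q`. Adding `½` to `½·log₂(1 + x)` turns it into `½·log₂(2(1 + x))`, and since
`½·log₂` is increasing on the positive reals, the maximum of the two gap terms is
`½·log₂ (max (2(1 + x)) (1 + 1/x))`. The first argument is increasing and the second decreasing
in `x`, and both equal `3` exactly at `x = ½`, so their maximum is at least `3` with equality
only there.
-/

open Real

lemma mul_logb_add_self {b c x : ℝ} (hb : 1 < b) (hx : 0 < x) :
    c * logb b x + c = c * logb b (b * x) := by
  rw [logb_mul (by positivity) hx.ne', logb_self_eq_one hb]
  ring

lemma max_mul_logb {b c x y : ℝ} (hb : 1 < b) (hc : 0 ≤ c) (hx : 0 < x) (hy : 0 < y) :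
    max (c * logb b x) (c * logb b y) = c * logb b (max x y) := by
  rcases le_total x y with hxy | hyx
  · rw [max_eq_right hxy, max_eq_right (by gcongr)]
  · rw [max_eq_left hyx, max_eq_left (by gcongr)]

lemma two_mul_one_add_div_le_three_iff {a b : ℝ} (hb : 0 < b) :
    2 * (1 + a / b) ≤ 3 ↔ 2 * a ≤ b := by
  rw [← le_div_iff₀' two_pos, ← le_sub_iff_add_le', div_le_iff₀ hb]
  constructor <;> intro h <;> linarith

lemma one_add_div_le_three_iff {a b : ℝ} (ha : 0 < a) : 1 + b / a ≤ 3 ↔ b ≤ 2 * a := by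
  rw [← le_sub_iff_add_le', div_le_iff₀ ha]
  constructor <;> intro h <;> linarith

lemma three_le_max_two_mul_one_add_div {a b : ℝ} (ha : 0 < a) (hb : 0 < b) :
    3 ≤ max (2 * (1 + a / b)) (1 + b / a) := by
  rcases le_total b (2 * a) with h | h
  · have : 1 / 2 ≤ a / b := by rw [le_div_iff₀ hb]; linarith
    exact le_max_of_le_left (by linarith)
  · have : 2 ≤ b / a := by rw [le_div_iff₀ ha]; linarith
    exact le_max_of_le_right (by linarith)

lemma max_two_mul_one_add_div_eq_three_iff {a b : ℝ} (ha : 0 < a) (hb : 0 < b) :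
    max (2 * (1 + a / b)) (1 + b / a) = 3 ↔ b = 2 * a := by
  rw [le_antisymm_iff, max_le_iff, two_mul_one_add_div_le_three_iff hb,
    one_add_div_le_three_iff ha]
  simp only [three_le_max_two_mul_one_add_div ha hb, and_true]
  exact ⟨fun ⟨h₁, h₂⟩ ↦ le_antisymm h₂ h₁, fun h ↦ ⟨h.ge, h.le⟩⟩

/-- For every `q > 0`,
`max{½·log₂(1 + s/q) + ½, ½·log₂(1 + q/s)} ≥ ½·log₂ 3`, with equality iff
`q = 2·s`, where `s = 1 - ρz² > 0`. -/
theorem minimax_gap_term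
    (ρz : ℝ) (hρz_lb : -1 < ρz) (hρz_ub : ρz < 1)
    (q : ℝ) (hq : 0 < q) :
    (1/2 * Real.logb 2 3
        ≤ max (1/2 * Real.logb 2 (1 + (1 - ρz^2) / q) + 1/2)
              (1/2 * Real.logb 2 (1 + q / (1 - ρz^2))))
    ∧ (max (1/2 * Real.logb 2 (1 + (1 - ρz^2) / q) + 1/2)
           (1/2 * Real.logb 2 (1 + q / (1 - ρz^2)))
         = 1/2 * Real.logb 2 3
       ↔ q = 2 * (1 - ρz^2)) := by
  set s := 1 - ρz^2
  have hs : 0 < s := by nlinarith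
  have hmax : max (1/2 * logb 2 (1 + s / q) + 1/2) (1/2 * logb 2 (1 + q / s))
      = 1/2 * logb 2 (max (2 * (1 + s / q)) (1 + q / s)) := by
    rw [mul_logb_add_self one_lt_two (by positivity),
      max_mul_logb one_lt_two (by norm_num) (by positivity) (by positivity)]
  have hM : 0 < max (2 * (1 + s / q)) (1 + q / s) := by positivity
  rw [hmax, mul_right_inj' (by norm_num), (logb_injOn_pos one_lt_two).eq_iff hM (by norm_num),
    max_two_mul_one_add_div_eq_three_iff hs hq]
  refine ⟨?_, Iff.rfl⟩
  gcongr
  · norm_num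
  · exact three_le_max_two_mul_one_add_div hs hq
end

section
/- On (0, ∞), the function q ↦ R1(q) is strictly increasing, and the function q ↦ R2(q) is nonincreasing; moreover R2 is strictly decreasing whenever h_SR ≠ ρ_z·h_SD. -/
/-!
Both rates are logarithms of Möbius functions of `q`. For `R1` the argument `1 + s / q` is
strictly decreasing. For `R2` the difference of logarithms is the logarithm of the quotient
`(1 + h_SD²) + (h_SR - ρ h_SD)² / (q + s)`, because with `s = 1 - ρ²` one has
`s + h_SD² + h_SR² - 2 ρ h_SD h_SR = s (1 + h_SD²) + (h_SR - ρ h_SD)²`.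
This quotient is nonincreasing in `q`, and strictly decreasing exactly when `h_SR ≠ ρ h_SD`.
-/

open Real Set

lemma antitoneOn_add_div_add {a b t : ℝ} (hb : 0 ≤ b) :
    AntitoneOn (fun q => a + b / (q + t)) (Ioi (-t)) := by
  intro x hx y _ hxy
  have : 0 < x + t := by linarith [mem_Ioi.mp hx]
  dsimp only
  gcongr

lemma strictAntiOn_add_div_add {a b t : ℝ} (hb : 0 < b) :
    StrictAntiOn (fun q => a + b / (q + t)) (Ioi (-t)) := by
  intro x hx y _ hxy
  have : 0 < x + t := by linarith [mem_Ioi.mp hx]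
  dsimp only
  gcongr

lemma logb_sub_logb_eq_logb_add_div {b x y ρ q : ℝ} (hρ : ρ ^ 2 < 1) (hq : 0 < q) :
    logb b (1 + (q + (q + 1) * x ^ 2 + y ^ 2 - 2 * ρ * x * y) / (1 - ρ ^ 2))
      - logb b (1 + q / (1 - ρ ^ 2))
      = logb b (1 + x ^ 2 + (y - ρ * x) ^ 2 / (q + (1 - ρ ^ 2))) := by
  have hs : 0 < 1 - ρ ^ 2 := sub_pos.mpr hρ
  have hqs : 0 < q + (1 - ρ ^ 2) := by linarith
  have hfactor : 1 + (q + (q + 1) * x ^ 2 + y ^ 2 - 2 * ρ * x * y) / (1 - ρ ^ 2)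
      = (1 + q / (1 - ρ ^ 2)) * (1 + x ^ 2 + (y - ρ * x) ^ 2 / (q + (1 - ρ ^ 2))) := by
    field_simp
    ring
  have hquot : 0 < 1 + x ^ 2 + (y - ρ * x) ^ 2 / (q + (1 - ρ ^ 2)) := by positivity
  rw [hfactor, logb_mul (by positivity) hquot.ne']
  ring

theorem R1_strictMono_R2_anti_general
    (hSD hRD hSR ρz : ℝ)
    (hρz_lb : -1 < ρz) (hρz_ub : ρz < 1) :
    StrictMonoOn (fun q : ℝ =>
        1/2 * Real.logb 2 (1 + hSD^2 + hRD^2)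
          - 1/2 * Real.logb 2 (1 + (1 - ρz^2) / q)) (Set.Ioi 0)
    ∧ AntitoneOn (fun q : ℝ =>
        1/2 * Real.logb 2 (1 + (q + (q+1)*hSD^2 + hSR^2 - 2*ρz*hSD*hSR) / (1 - ρz^2))
          - 1/2 * Real.logb 2 (1 + q / (1 - ρz^2))) (Set.Ioi 0)
    ∧ (hSR ≠ ρz * hSD →
        StrictAntiOn (fun q : ℝ =>
          1/2 * Real.logb 2 (1 + (q + (q+1)*hSD^2 + hSR^2 - 2*ρz*hSD*hSR) / (1 - ρz^2))
            - 1/2 * Real.logb 2 (1 + q / (1 - ρz^2))) (Set.Ioi 0)) := by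
  have hρ : ρz ^ 2 < 1 := by nlinarith
  have hs : 0 < 1 - ρz ^ 2 := sub_pos.mpr hρ
  have hIoi : Ioi 0 ⊆ Ioi (-(1 - ρz ^ 2)) := Ioi_subset_Ioi (by linarith)
  have hR2 : EqOn
      (fun q => 1/2 * logb 2 (1 + hSD ^ 2 + (hSR - ρz * hSD) ^ 2 / (q + (1 - ρz ^ 2))))
      (fun q => 1/2 * logb 2 (1 + (q + (q+1)*hSD^2 + hSR^2 - 2*ρz*hSD*hSR) / (1 - ρz^2))
        - 1/2 * logb 2 (1 + q / (1 - ρz^2))) (Ioi 0) := fun q hq => by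
    dsimp only
    rw [← mul_sub, logb_sub_logb_eq_logb_add_div hρ hq]
  have hquot_pos : MapsTo (fun q => 1 + hSD ^ 2 + (hSR - ρz * hSD) ^ 2 / (q + (1 - ρz ^ 2)))
      (Ioi 0) (Ioi 0) := fun q hq => by
    have : 0 < q + (1 - ρz ^ 2) := by linarith [mem_Ioi.mp hq]
    exact mem_Ioi.mpr (by positivity)
  have hlogb := strictMonoOn_logb one_lt_two
  refine ⟨?_, ?_, fun hne => ?_⟩
  · have hdecr : StrictAntiOn (fun q => 1 + (1 - ρz ^ 2) / q) (Ioi 0) := by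
      simpa using strictAntiOn_add_div_add (a := 1) (t := 0) hs
    intro x hx y hy hxy
    have := hlogb (add_pos one_pos (div_pos hs hy)) (add_pos one_pos (div_pos hs hx))
      (hdecr hx hy hxy)
    dsimp only
    linarith
  · exact ((monotone_mul_left_of_nonneg (by norm_num)).comp_antitoneOn
      (hlogb.monotoneOn.comp_AntitoneOn
        ((antitoneOn_add_div_add (sq_nonneg _)).mono hIoi) hquot_pos)).congr hR2
  · have hd : 0 < (hSR - ρz * hSD) ^ 2 := pow_two_pos_of_ne_zero (sub_ne_zero.mpr hne)
    exact ((strictMono_mul_left_of_pos (by norm_num)).comp_strictAntiOn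
      (hlogb.comp_strictAntiOn
        ((strictAntiOn_add_div_add hd).mono hIoi) hquot_pos)).congr hR2

/-- On `(0, ∞)`, `q ↦ R1(q)` is strictly increasing and
`q ↦ R2(q)` is nonincreasing; moreover `R2` is strictly decreasing whenever
`h_SR ≠ ρz·h_SD`. Here `s = 1 - ρz²`. -/
theorem R1_strictMono_R2_anti
    (hSD hRD hSR ρz : ℝ)
    (hSD_nn : 0 ≤ hSD) (hRD_nn : 0 ≤ hRD) (hSR_nn : 0 ≤ hSR)
    (hρz_lb : -1 < ρz) (hρz_ub : ρz < 1) :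
    StrictMonoOn (fun q : ℝ =>
        1/2 * Real.logb 2 (1 + hSD^2 + hRD^2)
          - 1/2 * Real.logb 2 (1 + (1 - ρz^2) / q)) (Set.Ioi 0)
    ∧ AntitoneOn (fun q : ℝ =>
        1/2 * Real.logb 2 (1 + (q + (q+1)*hSD^2 + hSR^2 - 2*ρz*hSD*hSR) / (1 - ρz^2))
          - 1/2 * Real.logb 2 (1 + q / (1 - ρz^2))) (Set.Ioi 0)
    ∧ (hSR ≠ ρz * hSD →
        StrictAntiOn (fun q : ℝ =>
          1/2 * Real.logb 2 (1 + (q + (q+1)*hSD^2 + hSR^2 - 2*ρz*hSD*hSR) / (1 - ρz^2))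
            - 1/2 * Real.logb 2 (1 + q / (1 - ρz^2))) (Set.Ioi 0)) :=
  R1_strictMono_R2_anti_general hSD hRD hSR ρz hρz_lb hρz_ub
end

section
/- At the compress-and-forward quantization level q_c, the two noisy-network-coding rate expressions coincide with the compress-and-forward rate: R1(q_c) = R_CF and R2(q_c) = R_CF. -/
/-!
Both equalities are factorizations of the arguments of the logarithms. With `T` the argument of
`R_CF` at quantization level `q`, one has `(1 + s/q) T = 1 + h_SD² + (s (1 + h_SD²) + (h_SR - ρ h_SD)²)/q`,
which is `1 + h_SD² + h_RD²` exactly at `q = q_c`; and `(1 + q/s) T` is the first argument of `R2(q)`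
for every `q`, because `h_SR² - 2ρ h_SD h_SR + h_SD² = (h_SR - ρ h_SD)² + s h_SD²`.
-/

open Real

lemma one_add_div_mul_add_div_add {u v : ℝ} (c b : ℝ) (hv : v ≠ 0) (huv : u + v ≠ 0) :
    (1 + u / v) * (c + b / (u + v)) = c + (u * c + b) / v := by
  field_simp
  ring

lemma half_logb_mul_sub_half_logb_left {x y : ℝ} (hx : 0 < x) (hy : 0 < y) :
    1/2 * logb 2 (x * y) - 1/2 * logb 2 x = 1/2 * logb 2 y := by
  rw [logb_mul hx.ne' hy.ne']
  ring

theorem R1_R2_eq_RCF_at_qc_general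
    (hSD hRD hSR ρz : ℝ)
    (hRD_pos : 0 < hRD)
    (hρz_lb : -1 < ρz) (hρz_ub : ρz < 1) :
    (1/2 * Real.logb 2 (1 + hSD^2 + hRD^2)
        - 1/2 * Real.logb 2 (1 + (1 - ρz^2) /
            (((1 - ρz^2) * (1 + hSD^2) + (hSR - ρz*hSD)^2) / hRD^2))
      = 1/2 * Real.logb 2 (1 + hSD^2 + (hSR - ρz*hSD)^2 /
          ((1 - ρz^2) + ((1 - ρz^2) * (1 + hSD^2) + (hSR - ρz*hSD)^2) / hRD^2)))
    ∧ (1/2 * Real.logb 2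
          (1 + ((((1 - ρz^2) * (1 + hSD^2) + (hSR - ρz*hSD)^2) / hRD^2)
                + ((((1 - ρz^2) * (1 + hSD^2) + (hSR - ρz*hSD)^2) / hRD^2) + 1) * hSD^2
                + hSR^2 - 2*ρz*hSD*hSR) / (1 - ρz^2))
        - 1/2 * Real.logb 2
            (1 + (((1 - ρz^2) * (1 + hSD^2) + (hSR - ρz*hSD)^2) / hRD^2) / (1 - ρz^2))
      = 1/2 * Real.logb 2 (1 + hSD^2 + (hSR - ρz*hSD)^2 /
          ((1 - ρz^2) + ((1 - ρz^2) * (1 + hSD^2) + (hSR - ρz*hSD)^2) / hRD^2))) := by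
  have hs : 0 < 1 - ρz^2 := by nlinarith
  set s := 1 - ρz^2
  set c := 1 + hSD^2
  set b := (hSR - ρz*hSD)^2
  have hN : 0 < s * c + b := by positivity
  set q := (s * c + b) / hRD^2
  have hq : 0 < q := by positivity
  have hT : 0 < c + b / (s + q) := by positivity
  constructor
  · have key : c + hRD^2 = (1 + s / q) * (c + b / (s + q)) := by
      rw [one_add_div_mul_add_div_add c b hq.ne' (by positivity), div_div_cancel₀ hN.ne']
    rw [key, half_logb_mul_sub_half_logb_left (by positivity) hT]
  · have key : 1 + (q + (q + 1) * hSD^2 + hSR^2 - 2*ρz*hSD*hSR) / s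
        = (1 + q / s) * (c + b / (s + q)) := by
      rw [add_comm s q, one_add_div_mul_add_div_add c b hs.ne' (by positivity)]
      field_simp
      ring
    rw [key, half_logb_mul_sub_half_logb_left (by positivity) hT]

/-- At the compress-and-forward quantization level `q_c`, the two
noisy-network-coding rate expressions coincide with the compress-and-forward
rate: `R1(q_c) = R_CF` and `R2(q_c) = R_CF`. Here `s = 1 - ρz²`. -/
theorem R1_R2_eq_RCF_at_qc
    (hSD hRD hSR ρz : ℝ)
    (hSD_nn : 0 ≤ hSD) (hRD_pos : 0 < hRD) (hSR_nn : 0 ≤ hSR)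
    (hρz_lb : -1 < ρz) (hρz_ub : ρz < 1) :
    (1/2 * Real.logb 2 (1 + hSD^2 + hRD^2)
        - 1/2 * Real.logb 2 (1 + (1 - ρz^2) /
            (((1 - ρz^2) * (1 + hSD^2) + (hSR - ρz*hSD)^2) / hRD^2))
      = 1/2 * Real.logb 2 (1 + hSD^2 + (hSR - ρz*hSD)^2 /
          ((1 - ρz^2) + ((1 - ρz^2) * (1 + hSD^2) + (hSR - ρz*hSD)^2) / hRD^2)))
    ∧ (1/2 * Real.logb 2
          (1 + ((((1 - ρz^2) * (1 + hSD^2) + (hSR - ρz*hSD)^2) / hRD^2)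
                + ((((1 - ρz^2) * (1 + hSD^2) + (hSR - ρz*hSD)^2) / hRD^2) + 1) * hSD^2
                + hSR^2 - 2*ρz*hSD*hSR) / (1 - ρz^2))
        - 1/2 * Real.logb 2
            (1 + (((1 - ρz^2) * (1 + hSD^2) + (hSR - ρz*hSD)^2) / hRD^2) / (1 - ρz^2))
      = 1/2 * Real.logb 2 (1 + hSD^2 + (hSR - ρz*hSD)^2 /
          ((1 - ρz^2) + ((1 - ρz^2) * (1 + hSD^2) + (hSR - ρz*hSD)^2) / hRD^2))) :=
  R1_R2_eq_RCF_at_qc_general hSD hRD hSR ρz hRD_pos hρz_lb hρz_ub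
end

section
/- For every q > 0, min{ R1(q), R2(q) } ≤ R_CF. (That is, the compress-and-forward rate equals the maximum over all quantization levels q > 0 of the noisy-network-coding rate min{R1(q), R2(q)}, and in particular dominates it at any fixed q.) -/
/-!
Write `a = h_SD²`, `b = (h_SR - ρ_z h_SD)²`, `c = h_RD²`. Since
`1 + (q + (q+1) a + h_SR² - 2 ρ_z h_SD h_SR)/s = (1 + q/s) (1 + a + b/(s+q))`,
the second rate is `R2(q) = ½ log₂ (1 + a + b/(s+q))`, which decreases in `q`, while `R1(q)`
increases in `q`. The two curves cross at `q_c`: there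
`(1 + s/q_c) (1 + a + b/(s+q_c)) = 1 + a + c`, so `R1(q_c) = R2(q_c) = R_CF`.
Hence for `q ≤ q_c` we have `R1(q) ≤ R_CF`, and for `q ≥ q_c` we have `R2(q) ≤ R_CF`.
-/

open Real Set

theorem min_le_max_of_monotoneOn_of_antitoneOn {α β : Type*} [LinearOrder α] [LinearOrder β]
    {f g : α → β} {S : Set α} (hf : MonotoneOn f S) (hg : AntitoneOn g S) {x x₀ : α}
    (hx : x ∈ S) (hx₀ : x₀ ∈ S) : min (f x) (g x) ≤ max (f x₀) (g x₀) := by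
  rcases le_total x x₀ with h | h
  · exact (min_le_left _ _).trans ((hf hx hx₀ h).trans (le_max_left _ _))
  · exact (min_le_right _ _).trans ((hg hx₀ hx h).trans (le_max_right _ _))

theorem one_add_div_mul_add_div_add_s8 {x y u b : ℝ} (hy : y ≠ 0) (hxy : x + y ≠ 0) :
    (1 + x / y) * (u + b / (x + y)) = u + (x * u + b) / y := by
  field_simp
  ring

theorem half_logb_mul_sub_half_logb {B x y : ℝ} (hx : x ≠ 0) (hy : y ≠ 0) :
    1/2 * logb B (x * y) - 1/2 * logb B x = 1/2 * logb B y := by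
  rw [logb_mul hx hy]
  ring

namespace RelayChannel

variable {a b c s q : ℝ}

/-- `R1(q)`, with `a = h_SD²` and `c = h_RD²`. -/
noncomputable def nncRate₁ (a c s q : ℝ) : ℝ :=
  1/2 * logb 2 (1 + a + c) - 1/2 * logb 2 (1 + s / q)

/-- `R2(q)` in factored form, with `b = (h_SR - ρ_z h_SD)²`. -/
noncomputable def nncRate₂ (a b s q : ℝ) : ℝ :=
  1/2 * logb 2 (1 + a + b / (s + q))

/-- `q_c`. -/
noncomputable def crossoverLevel (a b c s : ℝ) : ℝ :=
  (s * (1 + a) + b) / c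

theorem monotoneOn_nncRate₁ (hs : 0 ≤ s) : MonotoneOn (nncRate₁ a c s) (Ioi 0) := by
  intro x (hx : 0 < x) y (hy : 0 < y) hxy
  unfold nncRate₁
  gcongr
  norm_num

theorem antitoneOn_nncRate₂ (ha : 0 ≤ a) (hb : 0 ≤ b) (hs : 0 ≤ s) :
    AntitoneOn (nncRate₂ a b s) (Ioi 0) := by
  intro x (hx : 0 < x) y (hy : 0 < y) hxy
  unfold nncRate₂
  gcongr
  norm_num

theorem nncRate₁_crossoverLevel (ha : 0 ≤ a) (hb : 0 ≤ b) (hc : 0 < c) (hs : 0 < s) :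
    nncRate₁ a c s (crossoverLevel a b c s) = nncRate₂ a b s (crossoverLevel a b c s) := by
  have hqc : 0 < crossoverLevel a b c s := by unfold crossoverLevel; positivity
  have hfactor : (1 + s / crossoverLevel a b c s) * (1 + a + b / (s + crossoverLevel a b c s))
      = 1 + a + c := by
    rw [one_add_div_mul_add_div_add_s8 hqc.ne' (by positivity), crossoverLevel,
      div_div_cancel₀ (by positivity)]
  rw [nncRate₁, nncRate₂, ← hfactor, half_logb_mul_sub_half_logb (by positivity) (by positivity)]

theorem min_nncRate_le (ha : 0 ≤ a) (hb : 0 ≤ b) (hc : 0 < c) (hs : 0 < s) (hq : 0 < q) :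
    min (nncRate₁ a c s q) (nncRate₂ a b s q) ≤ nncRate₂ a b s (crossoverLevel a b c s) := by
  have hqc : 0 < crossoverLevel a b c s := by unfold crossoverLevel; positivity
  calc min (nncRate₁ a c s q) (nncRate₂ a b s q)
      ≤ max (nncRate₁ a c s (crossoverLevel a b c s)) (nncRate₂ a b s (crossoverLevel a b c s)) :=
        min_le_max_of_monotoneOn_of_antitoneOn (monotoneOn_nncRate₁ hs.le)
          (antitoneOn_nncRate₂ ha hb hs.le) hq hqc
    _ = nncRate₂ a b s (crossoverLevel a b c s) := by
        rw [nncRate₁_crossoverLevel ha hb hc hs, max_self]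

end RelayChannel

open RelayChannel in
theorem nnc_le_RCF_general
    (hSD hRD hSR ρz : ℝ)
    (hRD_pos : 0 < hRD)
    (hρz_lb : -1 < ρz) (hρz_ub : ρz < 1)
    (q : ℝ) (hq : 0 < q) :
    min (1/2 * Real.logb 2 (1 + hSD^2 + hRD^2)
          - 1/2 * Real.logb 2 (1 + (1 - ρz^2) / q))
        (1/2 * Real.logb 2 (1 + (q + (q+1)*hSD^2 + hSR^2 - 2*ρz*hSD*hSR) / (1 - ρz^2))
          - 1/2 * Real.logb 2 (1 + q / (1 - ρz^2)))
      ≤ 1/2 * Real.logb 2 (1 + hSD^2 + (hSR - ρz*hSD)^2 /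
          ((1 - ρz^2) + ((1 - ρz^2) * (1 + hSD^2) + (hSR - ρz*hSD)^2) / hRD^2)) := by
  have hs : 0 < 1 - ρz^2 := by nlinarith
  have hR₂ : 1 + (q + (q+1)*hSD^2 + hSR^2 - 2*ρz*hSD*hSR) / (1 - ρz^2)
      = (1 + q / (1 - ρz^2)) * (1 + hSD^2 + (hSR - ρz*hSD)^2 / (q + (1 - ρz^2))) := by
    rw [one_add_div_mul_add_div_add_s8 hs.ne' (by positivity)]
    field_simp
    ring
  rw [hR₂, half_logb_mul_sub_half_logb (by positivity) (by positivity), add_comm q]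
  exact min_nncRate_le (sq_nonneg _) (sq_nonneg _) (by positivity) hs hq

/-- For every `q > 0`, `min{R1(q), R2(q)} ≤ R_CF`, i.e. the
compress-and-forward rate dominates the noisy-network-coding rate at any
quantization level. Here `s = 1 - ρz²` and
`q_c = (s·(1 + h_SD²) + (h_SR - ρz·h_SD)²)/h_RD²`. -/
theorem nnc_le_RCF
    (hSD hRD hSR ρz : ℝ)
    (hSD_nn : 0 ≤ hSD) (hRD_pos : 0 < hRD) (hSR_nn : 0 ≤ hSR)
    (hρz_lb : -1 < ρz) (hρz_ub : ρz < 1)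
    (q : ℝ) (hq : 0 < q) :
    min (1/2 * Real.logb 2 (1 + hSD^2 + hRD^2)
          - 1/2 * Real.logb 2 (1 + (1 - ρz^2) / q))
        (1/2 * Real.logb 2 (1 + (q + (q+1)*hSD^2 + hSR^2 - 2*ρz*hSD*hSR) / (1 - ρz^2))
          - 1/2 * Real.logb 2 (1 + q / (1 - ρz^2)))
      ≤ 1/2 * Real.logb 2 (1 + hSD^2 + (hSR - ρz*hSD)^2 /
          ((1 - ρz^2) + ((1 - ρz^2) * (1 + hSD^2) + (hSR - ρz*hSD)^2) / hRD^2)) :=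
  nnc_le_RCF_general hSD hRD hSR ρz hRD_pos hρz_lb hρz_ub q hq
end

section
/- (Corollary 1, algebraic core.) The compress-and-forward rate is within ½·log₂ 3 of the cut-set bound: min{ R_UB1, R_UB2 } − R_CF < ½·log₂(3). -/
/-!
Write `a = 1 + h_SD²`, `g = h_RD²`, `t = h_SR - ρz·h_SD` and `P = s·a + t²`. Then the second cut-set
argument is `a + t²/s`, the first is at most `2a + 2g - 1`, and the compress-and-forward argument is
`a + t²g/(sg + P)`. If the relay–destination link is strong (`P < 2sg`), then `sg + P < 3sg` and three
times the CF argument beats the second cut-set argument; otherwise `sg + P ≤ 3P/2` and it beats the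
first one, since `(2g - a)(sg + P) - 3t²g = (2sg - P)(g + a) ≤ 0`.
-/

open Real

theorem min_cutSet_lt_three_mul_cf {a s g : ℝ} (t : ℝ) (ha : 0 < a) (hs : 0 < s) (hg : 0 ≤ g) :
    min (2 * a + 2 * g - 1) (a + t ^ 2 / s) < 3 * (a + t ^ 2 * g / (s * g + (s * a + t ^ 2))) := by
  have hP : 0 < s * a + t ^ 2 := by positivity
  have hD : 0 < s * g + (s * a + t ^ 2) := by positivity
  rcases lt_or_ge (s * a + t ^ 2) (2 * s * g) with hweak | hstrong
  · refine (min_le_right _ _).trans_lt ?_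
    have : t ^ 2 / s ≤ 3 * (t ^ 2 * g / (s * g + (s * a + t ^ 2))) := by
      rw [mul_div_assoc', div_le_div_iff₀ hs hD]
      nlinarith [mul_le_mul_of_nonneg_left hweak.le (sq_nonneg t)]
    linarith
  · refine (min_le_left _ _).trans_lt ?_
    have : 2 * g - a ≤ 3 * (t ^ 2 * g / (s * g + (s * a + t ^ 2))) := by
      rw [mul_div_assoc', le_div_iff₀ hD]
      nlinarith [mul_nonneg (sub_nonneg.2 hstrong) (add_nonneg hg ha.le)]
    linarith

theorem half_logb_min_sub_half_logb_lt {b A B X c : ℝ} (hb : 1 < b) (hA : 0 < A) (hB : 0 < B)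
    (hX : 0 < X) (h : min A B < c * X) :
    min (1 / 2 * logb b A) (1 / 2 * logb b B) - 1 / 2 * logb b X < 1 / 2 * logb b c := by
  have hc : 0 < c := pos_of_mul_pos_left ((lt_min hA hB).trans h) hX.le
  have hlog : logb b (min A B) < logb b c + logb b X := by
    rw [← logb_mul hc.ne' hX.ne']
    exact logb_lt_logb hb (lt_min hA hB) h
  have hmin : min (1 / 2 * logb b A) (1 / 2 * logb b B) ≤ 1 / 2 * logb b (min A B) := by
    rcases min_choice A B with hAB | hAB <;> rw [hAB]
    exacts [min_le_left _ _, min_le_right _ _]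
  linarith

theorem RCF_within_half_log_three_general
    (hSD hRD hSR ρz : ℝ)
    (hRD_pos : 0 < hRD)
    (hρz_lb : -1 < ρz) (hρz_ub : ρz < 1) :
    min (1/2 * Real.logb 2 (1 + hSD^2 + hRD^2 + 2*hSD*hRD))
        (1/2 * Real.logb 2 (1 + (hSD^2 + hSR^2 - 2*ρz*hSD*hSR) / (1 - ρz^2)))
      - 1/2 * Real.logb 2 (1 + hSD^2 + (hSR - ρz*hSD)^2 /
          ((1 - ρz^2) + ((1 - ρz^2) * (1 + hSD^2) + (hSR - ρz*hSD)^2) / hRD^2))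
      < 1/2 * Real.logb 2 3 := by
  have hs : 0 < 1 - ρz ^ 2 := by nlinarith
  have hUB2 : 1 + (hSD^2 + hSR^2 - 2*ρz*hSD*hSR) / (1 - ρz^2)
      = 1 + hSD^2 + (hSR - ρz*hSD)^2 / (1 - ρz^2) := by
    field_simp
    ring
  rw [hUB2, add_div' _ _ _ (pow_pos hRD_pos 2).ne', div_div_eq_mul_div]
  refine half_logb_min_sub_half_logb_lt one_lt_two (by nlinarith [sq_nonneg (hSD + hRD)])
    (by positivity) (by positivity) ?_
  calc _ ≤ min (2 * (1 + hSD^2) + 2 * hRD^2 - 1) (1 + hSD^2 + (hSR - ρz*hSD)^2 / (1 - ρz^2)) :=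
        min_le_min_right _ (by nlinarith [sq_nonneg (hSD - hRD)])
    _ < _ := min_cutSet_lt_three_mul_cf _ (by positivity) hs (sq_nonneg hRD)

/-- Corollary 1, algebraic core: The compress-and-forward rate
is within `½·log₂ 3` of the cut-set bound:
`min{R_UB1, R_UB2} - R_CF < ½·log₂ 3`. Here `s = 1 - ρz²` and
`q_c = (s·(1 + h_SD²) + (h_SR - ρz·h_SD)²)/h_RD²`. -/
theorem RCF_within_half_log_three
    (hSD hRD hSR ρz : ℝ)
    (hSD_nn : 0 ≤ hSD) (hRD_pos : 0 < hRD) (hSR_nn : 0 ≤ hSR)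
    (hρz_lb : -1 < ρz) (hρz_ub : ρz < 1) :
    min (1/2 * Real.logb 2 (1 + hSD^2 + hRD^2 + 2*hSD*hRD))
        (1/2 * Real.logb 2 (1 + (hSD^2 + hSR^2 - 2*ρz*hSD*hSR) / (1 - ρz^2)))
      - 1/2 * Real.logb 2 (1 + hSD^2 + (hSR - ρz*hSD)^2 /
          ((1 - ρz^2) + ((1 - ρz^2) * (1 + hSD^2) + (hSR - ρz*hSD)^2) / hRD^2))
      < 1/2 * Real.logb 2 3 :=
  RCF_within_half_log_three_general hSD hRD hSR ρz hRD_pos hρz_lb hρz_ub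
end

section
/- The decode-and-forward gap to the cut-set bound is unbounded when the noises are fully correlated: for every M > 0 there exist channel gains h_SD, h_SR, h_RD with 1 < h_SD² < h_SR² < h_RD² such that C̄ − R_DF > M. -/
/-!
With `h_SD² = 2` and `h_SR² = 3` the relay link caps the decode-and-forward rate at
`½·log₂ 4 = 1`, while the cut-set bound `½·log₂(1 + (h_SD + h_RD)²)` exceeds `log₂ h_RD`,
which is unbounded as `h_RD → ∞`.
-/

open Real Filter

noncomputable def dfRate (hSD hSR hRD : ℝ) : ℝ :=
  max (1/2 * logb 2 (1 + hSD^2))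
    (min (1/2 * logb 2 (1 + hSR^2)) (1/2 * logb 2 (1 + hSD^2 + hRD^2)))

-- `C̄` at noise correlation `ρ_z = 1`.
noncomputable def cutSetBound (hSD hRD : ℝ) : ℝ :=
  1/2 * logb 2 (1 + hSD^2 + hRD^2 + 2*hSD*hRD)

lemma dfRate_le_of_sq_le {hSD hSR : ℝ} (hRD : ℝ) (h : hSD^2 ≤ hSR^2) :
    dfRate hSD hSR hRD ≤ 1/2 * logb 2 (1 + hSR^2) := by
  have hmono : logb 2 (1 + hSD^2) ≤ logb 2 (1 + hSR^2) :=
    logb_le_logb_of_le one_lt_two (by positivity) (by linarith)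
  exact max_le (by linarith) (min_le_left _ _)

lemma logb_le_cutSetBound {hSD hRD : ℝ} (hSD_nonneg : 0 ≤ hSD) (hRD_pos : 0 < hRD) :
    logb 2 hRD ≤ cutSetBound hSD hRD := by
  have hsq : logb 2 (hRD^2) ≤ logb 2 (1 + hSD^2 + hRD^2 + 2*hSD*hRD) :=
    logb_le_logb_of_le one_lt_two (by positivity) (by nlinarith)
  rw [logb_pow] at hsq
  unfold cutSetBound
  push_cast at hsq
  linarith

theorem df_gap_unbounded_general (M : ℝ) :
    ∃ hSD hSR hRD : ℝ, 0 ≤ hSD ∧ 0 ≤ hSR ∧ 0 ≤ hRD ∧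
      1 < hSD^2 ∧ hSD^2 < hSR^2 ∧ hSR^2 < hRD^2 ∧
      (1/2 * Real.logb 2 (1 + hSD^2 + hRD^2 + 2*hSD*hRD))
        - max (1/2 * Real.logb 2 (1 + hSD^2))
              (min (1/2 * Real.logb 2 (1 + hSR^2))
                   (1/2 * Real.logb 2 (1 + hSD^2 + hRD^2)))
        > M := by
  obtain ⟨hRD, hRD_log, hRD_ge⟩ : ∃ x : ℝ, M + 1 < logb 2 x ∧ 2 ≤ x :=
    (((tendsto_logb_atTop one_lt_two).eventually_gt_atTop (M + 1)).and
      (eventually_ge_atTop 2)).exists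
  have h2 : √2 ^ 2 = 2 := sq_sqrt (by norm_num)
  have h3 : √3 ^ 2 = 3 := sq_sqrt (by norm_num)
  refine ⟨√2, √3, hRD, by positivity, by positivity, by positivity,
    by rw [h2]; norm_num, by rw [h2, h3]; norm_num, by rw [h3]; nlinarith, ?_⟩
  have hrate : dfRate √2 √3 hRD ≤ 1 :=
    calc dfRate √2 √3 hRD ≤ 1/2 * logb 2 (1 + √3^2) :=
          dfRate_le_of_sq_le hRD (by rw [h2, h3]; norm_num)
      _ = 1 := by
          rw [h3, show (1 : ℝ) + 3 = 2^2 by norm_num, logb_pow, logb_self_eq_one one_lt_two]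
          norm_num
  have hcut := logb_le_cutSetBound (sqrt_nonneg 2) (by linarith : 0 < hRD)
  change cutSetBound √2 hRD - dfRate √2 √3 hRD > M
  linarith

/-- The decode-and-forward gap to the cut-set bound (at noise
correlation `ρz = 1`) is unbounded: for every `M > 0` there exist channel
gains with `1 < h_SD² < h_SR² < h_RD²` such that `C̄ - R_DF > M`. -/
theorem df_gap_unbounded (M : ℝ) (hM : 0 < M) :
    ∃ hSD hSR hRD : ℝ, 0 ≤ hSD ∧ 0 ≤ hSR ∧ 0 ≤ hRD ∧
      1 < hSD^2 ∧ hSD^2 < hSR^2 ∧ hSR^2 < hRD^2 ∧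
      (1/2 * Real.logb 2 (1 + hSD^2 + hRD^2 + 2*hSD*hRD))
        - max (1/2 * Real.logb 2 (1 + hSD^2))
              (min (1/2 * Real.logb 2 (1 + hSR^2))
                   (1/2 * Real.logb 2 (1 + hSD^2 + hRD^2)))
        > M :=
  df_gap_unbounded_general M
end

section
/- (Closed form of the single-tap amplify-and-forward rate with equal power allocation and fully correlated noises.) Suppose h_SD, h_SR, h_RD > 0, h_SD ≠ h_SR, and α ∈ (0, 1/√(1 + h_SR²)] with α·h_RD ≠ 1. Then (1/(4π))·∫₀^{2π} log₂( (N(ω) + |H(ω)|²) / N(ω) ) dω = ½·log₂( (A + √(A² − B²)) / (1 + α²·h_RD² + |1 − α²·h_RD²|) ), where A := 1 + h_SD² + α²·h_RD²·(1 + h_SR²) and B := 2·α·h_RD·(1 + h_SD·h_SR) (note A > |B| under these hypotheses). -/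
/-!
For `|b| < a` put `s = √(a² - b²)` and `r = b / (a + s) ∈ (-1, 1)`; then
`a + b cos θ = (a + s)/2 · |e^{iθ} + r|²`, and the circle average of `log |z + r|` over the unit
circle vanishes (Jensen's formula), so `∫₀^{2π} log (a + b cos θ) dθ = 2π log ((a + s)/2)`.
The numerator `N(ω) + |H(ω)|² = A + B cos ω` and the denominator `N(ω)` are both of this form:
`A - B = (1 - αh_RD)² + (h_SD - αh_RD h_SR)²` and `A + B = (1 + αh_RD)² + (h_SD + αh_RD h_SR)²`,
while `√((1 + α²h_RD²)² - (2αh_RD)²) = |1 - α²h_RD²|`.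
-/

open Real

theorem add_mul_cos_pos {a b : ℝ} (hab : |b| < a) (θ : ℝ) : 0 < a + b * cos θ := by
  nlinarith [neg_abs_le (b * cos θ), abs_mul b (cos θ), abs_nonneg b,
    mul_le_mul_of_nonneg_left (abs_cos_le_one θ) (abs_nonneg b)]

theorem intervalIntegrable_log_add_mul_cos {a b : ℝ} (hab : |b| < a) (θ₁ θ₂ : ℝ) :
    IntervalIntegrable (fun θ => log (a + b * cos θ)) MeasureTheory.volume θ₁ θ₂ :=
  (Continuous.log (by fun_prop) fun θ => (add_mul_cos_pos hab θ).ne').intervalIntegrable _ _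

theorem integral_log_one_add_sq_add_two_mul_cos {r : ℝ} (hr : |r| < 1) :
    ∫ θ in (0:ℝ)..2 * π, log (1 + r ^ 2 + 2 * r * cos θ) = 0 := by
  have hnorm (θ : ℝ) :
      log (1 + r ^ 2 + 2 * r * cos θ) = 2 * log ‖circleMap 0 1 θ - (-r : ℂ)‖ := by
    have hsq : 1 + r ^ 2 + 2 * r * cos θ = ‖circleMap 0 1 θ - (-r : ℂ)‖ ^ 2 := by
      rw [Complex.sq_norm, Complex.normSq_apply]
      simp [circleMap, Complex.exp_ofReal_mul_I_re, Complex.exp_ofReal_mul_I_im]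
      nlinarith [sin_sq_add_cos_sq θ]
    rw [hsq, log_pow, Nat.cast_ofNat]
  have hjensen := circleAverage_log_norm_sub_const₀ (a := (-r : ℂ)) (by simpa using hr)
  rw [circleAverage_def, smul_eq_zero] at hjensen
  simp_rw [hnorm, intervalIntegral.integral_const_mul]
  rw [hjensen.resolve_left (by positivity), mul_zero]

theorem integral_log_add_mul_cos {a b : ℝ} (hab : |b| < a) :
    ∫ θ in (0:ℝ)..2 * π, log (a + b * cos θ) = 2 * π * log ((a + √(a ^ 2 - b ^ 2)) / 2) := by
  set s := √(a ^ 2 - b ^ 2)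
  have hs : s ^ 2 = a ^ 2 - b ^ 2 := sq_sqrt (by nlinarith [abs_nonneg b, sq_abs b])
  have has : 0 < a + s := by positivity [lt_of_le_of_lt (abs_nonneg b) hab]
  set r := b / (a + s) with hr_def
  have hr : |r| < 1 := by
    rw [hr_def, abs_div, abs_of_pos has, div_lt_one has]
    linarith [sqrt_nonneg (a ^ 2 - b ^ 2)]
  have hr' : |2 * r| < 1 + r ^ 2 := by
    obtain ⟨hr₁, hr₂⟩ := abs_lt.mp hr
    exact abs_lt.mpr ⟨by nlinarith, by nlinarith⟩
  have hfactor (θ : ℝ) : a + b * cos θ = (a + s) / 2 * (1 + r ^ 2 + 2 * r * cos θ) := by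
    rw [hr_def]
    field_simp
    linear_combination -hs
  calc ∫ θ in (0:ℝ)..2 * π, log (a + b * cos θ)
      = ∫ θ in (0:ℝ)..2 * π, (log ((a + s) / 2) + log (1 + r ^ 2 + 2 * r * cos θ)) :=
        intervalIntegral.integral_congr fun θ _ => by
          rw [hfactor θ, log_mul (by positivity) (add_mul_cos_pos hr' θ).ne']
    _ = 2 * π * log ((a + s) / 2) := by
        rw [intervalIntegral.integral_add intervalIntegrable_const
            (intervalIntegrable_log_add_mul_cos hr' _ _),
          integral_log_one_add_sq_add_two_mul_cos hr, intervalIntegral.integral_const, smul_eq_mul]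
        ring

theorem integral_logb_div_add_mul_cos (β : ℝ) {a b c d : ℝ} (hab : |b| < a) (hcd : |d| < c) :
    1 / (4 * π) * ∫ θ in (0:ℝ)..2 * π, logb β ((a + b * cos θ) / (c + d * cos θ))
      = 1 / 2 * logb β ((a + √(a ^ 2 - b ^ 2)) / (c + √(c ^ 2 - d ^ 2))) := by
  have hsum {a b : ℝ} (hab : |b| < a) : 0 < a + √(a ^ 2 - b ^ 2) := by
    positivity [lt_of_le_of_lt (abs_nonneg b) hab]
  have hsplit (θ : ℝ) : logb β ((a + b * cos θ) / (c + d * cos θ))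
      = (log (a + b * cos θ) - log (c + d * cos θ)) / log β := by
    rw [logb, log_div (add_mul_cos_pos hab θ).ne' (add_mul_cos_pos hcd θ).ne']
  simp_rw [hsplit]
  rw [intervalIntegral.integral_div,
    intervalIntegral.integral_sub (intervalIntegrable_log_add_mul_cos hab _ _)
      (intervalIntegrable_log_add_mul_cos hcd _ _),
    integral_log_add_mul_cos hab, integral_log_add_mul_cos hcd, logb,
    log_div (hsum hab).ne' (hsum hcd).ne', log_div (hsum hab).ne' two_ne_zero,
    log_div (hsum hcd).ne' two_ne_zero]
  field_simp
  ring

open Real in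
theorem af_rate_closed_form_general
    (hSD hSR hRD α : ℝ)
    (hRD_pos : 0 < hRD)
    (hα_pos : 0 < α)
    (hαRD : α * hRD ≠ 1) :
    (1 / (4 * π)) * ∫ ω in (0:ℝ)..(2 * π),
        Real.logb 2
          (((1 + α^2*hRD^2 + 2*α*hRD*Real.cos ω)
              + (hSD^2 + α^2*hRD^2*hSR^2 + 2*α*hSD*hRD*hSR*Real.cos ω))
            / (1 + α^2*hRD^2 + 2*α*hRD*Real.cos ω))
      = 1/2 * Real.logb 2
          (((1 + hSD^2 + α^2*hRD^2*(1 + hSR^2))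
              + Real.sqrt ((1 + hSD^2 + α^2*hRD^2*(1 + hSR^2))^2
                  - (2*α*hRD*(1 + hSD*hSR))^2))
            / (1 + α^2*hRD^2 + |1 - α^2*hRD^2|)) := by
  have hc : 0 < α * hRD := mul_pos hα_pos hRD_pos
  have hc1 : 0 < (1 - α * hRD) ^ 2 := sq_pos_of_ne_zero (sub_ne_zero.mpr hαRD.symm)
  have hnum : |2 * α * hRD * (1 + hSD * hSR)| < 1 + hSD ^ 2 + α ^ 2 * hRD ^ 2 * (1 + hSR ^ 2) :=
    abs_lt.mpr ⟨by nlinarith [sq_nonneg (hSD + α * hRD * hSR)],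
      by nlinarith [sq_nonneg (hSD - α * hRD * hSR)]⟩
  have hden : |2 * α * hRD| < 1 + α ^ 2 * hRD ^ 2 := abs_lt.mpr ⟨by nlinarith, by nlinarith⟩
  have hsqrt : √((1 + α ^ 2 * hRD ^ 2) ^ 2 - (2 * α * hRD) ^ 2) = |1 - α ^ 2 * hRD ^ 2| := by
    rw [← sqrt_sq_eq_abs]
    ring_nf
  rw [← hsqrt, ← integral_logb_div_add_mul_cos 2 hnum hden]
  congr 2 with ω
  ring_nf

open Real in
/-- Closed form of the single-tap amplify-and-forward rate with
equal power allocation and fully correlated noises (`ρz = 1`). With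
`N(ω) = 1 + α²h_RD² + 2αh_RD·cos ω`,
`|H(ω)|² = h_SD² + α²h_RD²h_SR² + 2αh_SD h_RD h_SR·cos ω`,
`A = 1 + h_SD² + α²h_RD²(1 + h_SR²)` and `B = 2αh_RD(1 + h_SD·h_SR)`:
`(1/(4π))·∫₀^{2π} log₂((N(ω) + |H(ω)|²)/N(ω)) dω
  = ½·log₂((A + √(A² - B²))/(1 + α²h_RD² + |1 - α²h_RD²|))`. -/
theorem af_rate_closed_form
    (hSD hSR hRD α : ℝ)
    (hSD_pos : 0 < hSD) (hSR_pos : 0 < hSR) (hRD_pos : 0 < hRD)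
    (hα_pos : 0 < α) (hα_ub : α ≤ 1 / Real.sqrt (1 + hSR^2))
    (hne : hSD ≠ hSR) (hαRD : α * hRD ≠ 1) :
    (1 / (4 * π)) * ∫ ω in (0:ℝ)..(2 * π),
        Real.logb 2
          (((1 + α^2*hRD^2 + 2*α*hRD*Real.cos ω)
              + (hSD^2 + α^2*hRD^2*hSR^2 + 2*α*hSD*hRD*hSR*Real.cos ω))
            / (1 + α^2*hRD^2 + 2*α*hRD*Real.cos ω))
      = 1/2 * Real.logb 2
          (((1 + hSD^2 + α^2*hRD^2*(1 + hSR^2))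
              + Real.sqrt ((1 + hSD^2 + α^2*hRD^2*(1 + hSR^2))^2
                  - (2*α*hRD*(1 + hSD*hSR))^2))
            / (1 + α^2*hRD^2 + |1 - α^2*hRD^2|)) :=
  af_rate_closed_form_general hSD hSR hRD α hRD_pos hα_pos hαRD
end
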